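/- Let M = (E, ρ) be a simple binary matroid that contains no isthmuses. Then every cyclic flat Y of M equals the union of the atoms of the lattice of cyclic flats Z(M) that are contained in Y; in particular, the lattice of cyclic flats Z(M) is atomic. -/

import Mathlib

open Finset

structure FinMatroid (α : Type*) [DecidableEq α] where
  E : Finset α
  rk : Finset α → ℕ
  rk_le_card : ∀ A, A ⊆ E → rk A ≤ A.card
  rk_mono : ∀ A B, A ⊆ B → B ⊆ E → rk A ≤ rk B
  rk_submod : ∀ A B, A ⊆ E → B ⊆ E → rk (A ∪ B) + rk (A ∩ B) ≤ rk A + rk B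

namespace FinMatroid

variable {α : Type*} [DecidableEq α]

/-- The closure operator `cl(A) = {e ∈ E : ρ(A ∪ {e}) = ρ(A)}`. -/
def cl (M : FinMatroid α) (A : Finset α) : Finset α :=
  M.E.filter fun e => M.rk (insert e A) = M.rk A

/-- The cyclic operator `cyc(A) = {e ∈ A : ρ(A − {e}) = ρ(A)}`. -/
def cyc (M : FinMatroid α) (A : Finset α) : Finset α :=
  A.filter fun e => M.rk (A.erase e) = M.rk A

/-- A flat is a set fixed by the closure operator. -/
def IsFlat (M : FinMatroid α) (F : Finset α) : Prop :=
  F ⊆ M.E ∧ M.cl F = F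

/-- A cyclic set is a set fixed by the cyclic operator. -/
def IsCyclic (M : FinMatroid α) (U : Finset α) : Prop :=
  U ⊆ M.E ∧ M.cyc U = U

/-- A cyclic flat is a set fixed by both the closure and the cyclic operators. -/
def IsCyclicFlat (M : FinMatroid α) (Z : Finset α) : Prop :=
  Z ⊆ M.E ∧ M.cl Z = Z ∧ M.cyc Z = Z

/-- The minor `M|Y/X`: restriction to `Y` followed by contraction of `X`. -/
def minor (M : FinMatroid α) (X Y : Finset α) (hXY : X ⊆ Y) (hY : Y ⊆ M.E) :
    FinMatroid α where
  E := Y \ X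
  rk A := M.rk (A ∪ X) - M.rk X
  rk_le_card := by
    intro A hA
    have hAE : A ⊆ M.E := fun a ha => hY (mem_sdiff.mp (hA ha)).1
    have hXE : X ⊆ M.E := hXY.trans hY
    have h1 := M.rk_submod A X hAE hXE
    have h2 := M.rk_le_card A hAE
    show M.rk (A ∪ X) - M.rk X ≤ A.card
    omega
  rk_mono := by
    intro A B hAB hB
    have hBE : B ⊆ M.E := fun a ha => hY (mem_sdiff.mp (hB ha)).1
    have hBX : B ∪ X ⊆ M.E := union_subset hBE (hXY.trans hY)
    have := M.rk_mono (A ∪ X) (B ∪ X) (union_subset_union hAB Subset.rfl) hBX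
    show M.rk (A ∪ X) - M.rk X ≤ M.rk (B ∪ X) - M.rk X
    omega
  rk_submod := by
    intro A B hA hB
    have hAE : A ⊆ M.E := fun a ha => hY (mem_sdiff.mp (hA ha)).1
    have hBE : B ⊆ M.E := fun a ha => hY (mem_sdiff.mp (hB ha)).1
    have hXE : X ⊆ M.E := hXY.trans hY
    have hAX : A ∪ X ⊆ M.E := union_subset hAE hXE
    have hBX : B ∪ X ⊆ M.E := union_subset hBE hXE
    have hsub := M.rk_submod (A ∪ X) (B ∪ X) hAX hBX
    have e1 : (A ∪ X) ∪ (B ∪ X) = (A ∪ B) ∪ X := by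
      ext x; simp only [mem_union]; tauto
    have e2 : (A ∪ X) ∩ (B ∪ X) = (A ∩ B) ∪ X := by
      ext x; simp only [mem_union, mem_inter]; tauto
    rw [e1, e2] at hsub
    have h1 : M.rk X ≤ M.rk (A ∪ X) := M.rk_mono X _ subset_union_right hAX
    have h2 : M.rk X ≤ M.rk (B ∪ X) := M.rk_mono X _ subset_union_right hBX
    have hIX : (A ∩ B) ∪ X ⊆ M.E := union_subset (inter_subset_left.trans hAE) hXE
    have hUX : (A ∪ B) ∪ X ⊆ M.E := union_subset (union_subset hAE hBE) hXE
    have h3 : M.rk X ≤ M.rk ((A ∩ B) ∪ X) := M.rk_mono X _ subset_union_right hIX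
    have h4 : M.rk X ≤ M.rk ((A ∪ B) ∪ X) := M.rk_mono X _ subset_union_right hUX
    show M.rk ((A ∪ B) ∪ X) - M.rk X + (M.rk ((A ∩ B) ∪ X) - M.rk X) ≤
      (M.rk (A ∪ X) - M.rk X) + (M.rk (B ∪ X) - M.rk X)
    omega

/-- The restriction `M|Y`. -/
def restrict (M : FinMatroid α) (Y : Finset α) (hY : Y ⊆ M.E) : FinMatroid α where
  E := Y
  rk := M.rk
  rk_le_card := fun A hA => M.rk_le_card A (hA.trans hY)
  rk_mono := fun A B hAB hB => M.rk_mono A B hAB (hB.trans hY)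
  rk_submod := fun A B hA hB => M.rk_submod A B (hA.trans hY) (hB.trans hY)

/-- `M` is binary: it is the matroid of linear dependence of a family of
vectors over the field with two elements. -/
def IsBinary (M : FinMatroid α) : Prop :=
  ∃ (m : ℕ) (φ : α → (Fin m → ZMod 2)),
    ∀ A : Finset α, A ⊆ M.E →
      M.rk A = Module.finrank (ZMod 2) (Submodule.span (ZMod 2) (φ '' (A : Set α)))

def Simple (M : FinMatroid α) : Prop :=
  (∀ e ∈ M.E, M.rk {e} = 1) ∧
    ∀ e ∈ M.E, ∀ f ∈ M.E, e ≠ f → M.rk ({e, f} : Finset α) = 2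

def NoIsthmus (M : FinMatroid α) : Prop :=
  ∀ e ∈ M.E, M.rk (M.E.erase e) = M.rk M.E

def IsMinDist (M : FinMatroid α) (d : ℕ) : Prop :=
  (∃ X ⊆ M.E, M.rk (M.E \ X) < M.rk M.E ∧ X.card = d) ∧
    ∀ X ⊆ M.E, M.rk (M.E \ X) < M.rk M.E → d ≤ X.card

def IsAtomCF (M : FinMatroid α) (Z : Finset α) : Prop :=
  M.IsCyclicFlat Z ∧ Z ≠ ∅ ∧ ¬ ∃ Z', M.IsCyclicFlat Z' ∧ ∅ ⊂ Z' ∧ Z' ⊂ Z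

def IsCoatomCF (M : FinMatroid α) (Z : Finset α) : Prop :=
  M.IsCyclicFlat Z ∧ Z ⊂ M.E ∧ ¬ ∃ Z', M.IsCyclicFlat Z' ∧ Z ⊂ Z' ∧ Z' ⊂ M.E

def IsCircuit (M : FinMatroid α) (C : Finset α) : Prop :=
  C ⊆ M.E ∧ M.rk C < C.card ∧ ∀ D ⊂ C, M.rk D = D.card

end FinMatroid

/-!
Fix a representation `φ` of `M` over GF(2). An element `x` of a cyclic flat `F` lies in a
minimal nonempty set `C ⊆ F` with `∑ e ∈ C, φ e = 0`, a circuit. If `F` is not an atom, some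
cyclic flat strictly inside `F` still contains `x`. Either `rk C < rk F` and `cl C` is one; or
`F = C`, which is impossible as a circuit contains no smaller nonempty cyclic set; or some
`g ∈ F \ C` has `φ g = ∑ e ∈ P, φ e` for a set `P ⊆ C - x` with at least two elements (by
simplicity), and then `{g} ∪ (C \ P)` is a shorter zero-sum set through `x`, whose closure has
rank less than `rk C = rk F`. So a minimal cyclic flat inside `F` containing `x` is an atom.
-/

open Submodule Module

def IsZeroSum {α V : Type*} [AddCommMonoid V] (φ : α → V) (D : Finset α) : Prop :=
  D.Nonempty ∧ ∑ e ∈ D, φ e = 0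

section ZeroSum

variable {α V : Type*} [DecidableEq α] [AddCommGroup V] {φ : α → V}

lemma exists_minimal_isZeroSum_mem {D : Finset α} {x : α} (hx : x ∈ D)
    (hD : ∑ e ∈ D, φ e = 0) : ∃ C ⊆ D, x ∈ C ∧ Minimal (IsZeroSum φ) C := by
  obtain ⟨C, hCD, ⟨hxC, hC⟩, hCmin⟩ :=
    exists_minimal_le_of_wellFoundedLT (fun C => x ∈ C ∧ ∑ e ∈ C, φ e = 0) D ⟨hx, hD⟩
  refine ⟨C, hCD, hxC, ⟨⟨x, hxC⟩, hC⟩, fun D' ⟨⟨y, hy⟩, hD'⟩ hD'C => ?_⟩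
  by_cases hxD' : x ∈ D'
  · exact hCmin ⟨hxD', hD'⟩ hD'C
  · have hsdiff : ∑ e ∈ C \ D', φ e = 0 := by rw [sum_sdiff_eq_sub hD'C, hC, hD', sub_zero]
    have := hCmin ⟨mem_sdiff.mpr ⟨hxC, hxD'⟩, hsdiff⟩ sdiff_subset (hD'C hy)
    exact absurd hy (mem_sdiff.mp this).2

end ZeroSum

namespace ZModModule

variable {α V : Type*} [DecidableEq α] [AddCommGroup V] [Module (ZMod 2) V] {φ : α → V}

lemma sum_insert_eq_zero_iff {P : Finset α} {a : α} (ha : a ∉ P) :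
    ∑ e ∈ insert a P, φ e = 0 ↔ φ a = ∑ e ∈ P, φ e := by
  rw [sum_insert ha, add_eq_zero_iff_eq_neg, neg_eq_self]

lemma mem_span_image_iff_exists_sum {A : Finset α} {v : V} :
    v ∈ span (ZMod 2) (φ '' A) ↔ ∃ P ⊆ A, ∑ e ∈ P, φ e = v := by
  rw [mem_span_image_finset_iff_exists_fun']
  constructor
  · rintro ⟨c, rfl⟩
    refine ⟨A.filter (c · = 1), filter_subset _ _, ?_⟩
    rw [sum_filter]
    refine sum_congr rfl fun e _ => ?_
    have : ∀ a : ZMod 2, a = 0 ∨ a = 1 := by decide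
    rcases this (c e) with h | h <;> simp [h]
  · rintro ⟨P, hP, rfl⟩
    refine ⟨fun e => if e ∈ P then 1 else 0, ?_⟩
    simp only [ite_smul, one_smul, zero_smul, sum_ite_mem, inter_eq_right.mpr hP]

end ZModModule

namespace FinMatroid

variable {α : Type*} [DecidableEq α] (M : FinMatroid α)

section Closure

variable {M} {A B S F : Finset α} {e : α}

lemma mem_cl_iff : e ∈ M.cl A ↔ e ∈ M.E ∧ M.rk (insert e A) = M.rk A := mem_filter

lemma cl_subset_ground (A : Finset α) : M.cl A ⊆ M.E := filter_subset _ _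

lemma subset_cl (hA : A ⊆ M.E) : A ⊆ M.cl A := fun e he =>
  mem_cl_iff.mpr ⟨hA he, by rw [insert_eq_self.mpr he]⟩

lemma cl_mono (hAB : A ⊆ B) (hB : B ⊆ M.E) : M.cl A ⊆ M.cl B := by
  intro e he
  obtain ⟨heE, hrk⟩ := mem_cl_iff.mp he
  have hsub := M.rk_submod B (insert e A) hB (insert_subset heE (hAB.trans hB))
  rw [union_insert, union_eq_left.mpr hAB] at hsub
  have hA : M.rk A ≤ M.rk (B ∩ insert e A) :=
    M.rk_mono _ _ (subset_inter hAB (subset_insert e A)) (inter_subset_left.trans hB)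
  have hB' : M.rk B ≤ M.rk (insert e B) :=
    M.rk_mono _ _ (subset_insert e B) (insert_subset heE hB)
  exact mem_cl_iff.mpr ⟨heE, by omega⟩

lemma rk_union_of_subset_cl (hA : A ⊆ M.E) (hB : B ⊆ M.cl A) : M.rk (A ∪ B) = M.rk A := by
  induction B using Finset.induction_on with
  | empty => rw [union_empty]
  | insert a B _ ih =>
    obtain ⟨haB, hBA⟩ := insert_subset_iff.mp hB
    have hABE : A ∪ B ⊆ M.E := union_subset hA (hBA.trans (cl_subset_ground A))
    have ha : a ∈ M.cl (A ∪ B) := cl_mono subset_union_left hABE haB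
    rw [union_insert, (mem_cl_iff.mp ha).2, ih hBA]

lemma rk_cl (hA : A ⊆ M.E) : M.rk (M.cl A) = M.rk A := by
  simpa only [union_eq_right.mpr (subset_cl hA)] using rk_union_of_subset_cl hA Subset.rfl

lemma cl_cl (hA : A ⊆ M.E) : M.cl (M.cl A) = M.cl A := by
  refine Subset.antisymm (fun e he => ?_) (subset_cl (cl_subset_ground A))
  obtain ⟨heE, hrk⟩ := mem_cl_iff.mp he
  have hle : M.rk (insert e A) ≤ M.rk (insert e (M.cl A)) :=
    M.rk_mono _ _ (insert_subset_insert e (subset_cl hA)) (insert_subset heE (cl_subset_ground A))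
  have hge : M.rk A ≤ M.rk (insert e A) :=
    M.rk_mono _ _ (subset_insert e A) (insert_subset heE hA)
  exact mem_cl_iff.mpr ⟨heE, by rw [rk_cl hA] at hrk; omega⟩

lemma cyc_eq_self_iff : M.cyc A = A ↔ ∀ e ∈ A, M.rk (A.erase e) = M.rk A := filter_eq_self

lemma isCyclicFlat_cl (hS : S ⊆ M.E) (hcyc : ∀ e ∈ S, M.rk (S.erase e) = M.rk S) :
    M.IsCyclicFlat (M.cl S) := by
  refine ⟨cl_subset_ground S, cl_cl hS, cyc_eq_self_iff.mpr fun e he => ?_⟩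
  have hsubE : (M.cl S).erase e ⊆ M.E := (erase_subset e _).trans (cl_subset_ground S)
  have hle : M.rk ((M.cl S).erase e) ≤ M.rk (M.cl S) :=
    M.rk_mono _ _ (erase_subset e _) (cl_subset_ground S)
  rw [rk_cl hS] at hle ⊢
  by_cases heS : e ∈ S
  · have := M.rk_mono _ _ (erase_subset_erase e (subset_cl hS)) hsubE
    rw [hcyc e heS] at this
    omega
  · have := M.rk_mono _ _ (subset_erase.mpr ⟨subset_cl hS, heS⟩) hsubE
    omega

lemma cl_ssubset_of_rk_lt (hSF : S ⊆ F) (hF : F ⊆ M.E) (hFcl : M.cl F = F)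
    (hrk : M.rk S < M.rk F) : M.cl S ⊂ F := by
  refine (hFcl ▸ cl_mono hSF hF : M.cl S ⊆ F).ssubset_of_ne fun h => ?_
  have := rk_cl (hSF.trans hF)
  rw [h] at this
  omega

end Closure

def IsRepresentation (K : Type*) {V : Type*} [Field K] [AddCommGroup V] [Module K V]
    (φ : α → V) : Prop :=
  ∀ A ⊆ M.E, M.rk A = finrank K (span K (φ '' (A : Set α)))

namespace IsRepresentation

section Field

variable {M} {K V : Type*} [Field K] [AddCommGroup V] [Module K V] {φ : α → V}
  {A B : Finset α} {e : α}

lemma span_image_eq_of_rk_eq (hφ : M.IsRepresentation K φ) (hAB : A ⊆ B) (hB : B ⊆ M.E)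
    (h : M.rk A = M.rk B) : span K (φ '' A) = span K (φ '' B) := by
  have := FiniteDimensional.span_of_finite K (B.finite_toSet.image φ)
  refine eq_of_le_of_finrank_le (span_mono (Set.image_mono (coe_subset.mpr hAB))) ?_
  rw [← hφ A (hAB.trans hB), ← hφ B hB, h]

lemma rk_insert_eq_iff (hφ : M.IsRepresentation K φ) (hA : A ⊆ M.E) (he : e ∈ M.E) :
    M.rk (insert e A) = M.rk A ↔ φ e ∈ span K (φ '' A) := by
  refine ⟨fun h => ?_, fun h => ?_⟩
  · rw [hφ.span_image_eq_of_rk_eq (subset_insert e A) (insert_subset he hA) h.symm]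
    exact subset_span (Set.mem_image_of_mem φ (mem_coe.mpr (mem_insert_self e A)))
  · rw [hφ _ (insert_subset he hA), hφ A hA, coe_insert, Set.image_insert_eq,
      span_insert_eq_span h]

lemma rk_erase_eq_iff (hφ : M.IsRepresentation K φ) (hA : A ⊆ M.E) (he : e ∈ A) :
    M.rk (A.erase e) = M.rk A ↔ φ e ∈ span K (φ '' ↑(A.erase e)) := by
  have := hφ.rk_insert_eq_iff ((erase_subset e A).trans hA) (hA he)
  rw [insert_erase he] at this
  exact eq_comm.trans this

lemma ne_zero (hφ : M.IsRepresentation K φ) (hs : M.Simple) (he : e ∈ M.E) : φ e ≠ 0 := by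
  intro h0
  have := hφ {e} (singleton_subset_iff.mpr he)
  rw [hs.1 e he, coe_singleton, Set.image_singleton, h0, span_zero_singleton, finrank_bot] at this
  exact one_ne_zero this

lemma injOn (hφ : M.IsRepresentation K φ) (hs : M.Simple) : Set.InjOn φ M.E := by
  intro e he f hf h
  by_contra hne
  have := hφ {e, f} (insert_subset he (singleton_subset_iff.mpr hf))
  rw [hs.2 e he f hf hne, coe_pair, Set.image_pair, h, Set.pair_eq_singleton,
    finrank_span_singleton (hφ.ne_zero hs hf)] at this
  omega

end Field

section Binary

open ZModModule

variable {M} {V : Type*} [AddCommGroup V] [Module (ZMod 2) V] {φ : α → V}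
  {A C D F S : Finset α} {x : α}

lemma exists_sum_eq_zero_mem_of_rk_erase_eq (hφ : M.IsRepresentation (ZMod 2) φ)
    (hA : A ⊆ M.E) (hx : x ∈ A) (h : M.rk (A.erase x) = M.rk A) :
    ∃ D ⊆ A, x ∈ D ∧ ∑ e ∈ D, φ e = 0 := by
  obtain ⟨P, hP, hPsum⟩ := mem_span_image_iff_exists_sum.mp ((hφ.rk_erase_eq_iff hA hx).mp h)
  have hxP : x ∉ P := fun h => notMem_erase x A (hP h)
  exact ⟨insert x P, insert_subset hx (hP.trans (erase_subset x A)), mem_insert_self x P,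
    (sum_insert_eq_zero_iff hxP).mpr hPsum.symm⟩

lemma rk_erase_eq_of_sum_eq_zero (hφ : M.IsRepresentation (ZMod 2) φ) (hD : D ⊆ M.E)
    (hsum : ∑ e ∈ D, φ e = 0) (hx : x ∈ D) : M.rk (D.erase x) = M.rk D := by
  rw [hφ.rk_erase_eq_iff hD hx, mem_span_image_iff_exists_sum]
  rw [← insert_erase hx, sum_insert_eq_zero_iff (notMem_erase x D)] at hsum
  exact ⟨D.erase x, Subset.rfl, hsum.symm⟩

lemma rk_lt_card_of_isZeroSum (hφ : M.IsRepresentation (ZMod 2) φ) (hD : D ⊆ M.E)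
    (hDz : IsZeroSum φ D) : M.rk D < D.card := by
  obtain ⟨⟨x, hx⟩, hsum⟩ := hDz
  have h1 := M.rk_le_card _ ((erase_subset x D).trans hD)
  have h2 := card_erase_add_one hx
  rw [hφ.rk_erase_eq_of_sum_eq_zero hD hsum hx] at h1
  omega

lemma exists_isZeroSum_subset_of_rk_lt_card (hφ : M.IsRepresentation (ZMod 2) φ)
    (hA : A ⊆ M.E) (h : M.rk A < A.card) : ∃ D ⊆ A, IsZeroSum φ D := by
  induction A using Finset.induction_on with
  | empty => simp at h
  | insert a B haB ih =>
    obtain ⟨haE, hBE⟩ := insert_subset_iff.mp hA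
    by_cases hB : M.rk B < B.card
    · obtain ⟨D, hDB, hD⟩ := ih hBE hB
      exact ⟨D, hDB.trans (subset_insert a B), hD⟩
    · have hmono := M.rk_mono _ _ (subset_insert a B) hA
      rw [card_insert_of_notMem haB] at h
      have hrk : M.rk (erase (insert a B) a) = M.rk (insert a B) := by
        rw [erase_insert haB]
        omega
      obtain ⟨D, hDA, haD, hD⟩ :=
        hφ.exists_sum_eq_zero_mem_of_rk_erase_eq hA (mem_insert_self a B) hrk
      exact ⟨D, hDA, ⟨a, haD⟩, hD⟩

lemma rk_erase_eq_card_of_minimal_isZeroSum (hφ : M.IsRepresentation (ZMod 2) φ) (hC : C ⊆ M.E)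
    (hmin : Minimal (IsZeroSum φ) C) (hx : x ∈ C) : M.rk (C.erase x) = (C.erase x).card := by
  by_contra hne
  have hlt := lt_of_le_of_ne (M.rk_le_card _ ((erase_subset x C).trans hC)) hne
  obtain ⟨D, hDC, hD⟩ :=
    hφ.exists_isZeroSum_subset_of_rk_lt_card ((erase_subset x C).trans hC) hlt
  exact notMem_erase x C (hDC (hmin.2 hD (hDC.trans (erase_subset x C)) hx))

lemma rk_add_one_eq_card_of_minimal_isZeroSum (hφ : M.IsRepresentation (ZMod 2) φ)
    (hC : C ⊆ M.E) (hmin : Minimal (IsZeroSum φ) C) : M.rk C + 1 = C.card := by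
  obtain ⟨x, hx⟩ := hmin.1.1
  rw [← hφ.rk_erase_eq_of_sum_eq_zero hC hmin.1.2 hx,
    hφ.rk_erase_eq_card_of_minimal_isZeroSum hC hmin hx, card_erase_add_one hx]

lemma exists_isCyclicFlat_mem_ssubset_of_sum_eq_zero (hφ : M.IsRepresentation (ZMod 2) φ)
    (hF : M.IsCyclicFlat F) (hSF : S ⊆ F) (hsum : ∑ e ∈ S, φ e = 0) (hx : x ∈ S)
    (hrk : M.rk S < M.rk F) : ∃ H, M.IsCyclicFlat H ∧ x ∈ H ∧ H ⊂ F := by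
  have hSE := hSF.trans hF.1
  exact ⟨M.cl S, isCyclicFlat_cl hSE fun e he => hφ.rk_erase_eq_of_sum_eq_zero hSE hsum he,
    subset_cl hSE hx, cl_ssubset_of_rk_lt hSF hF.1 hF.2.1 hrk⟩

lemma exists_sum_eq_zero_card_lt (hφ : M.IsRepresentation (ZMod 2) φ) (hs : M.Simple)
    (hC : C ⊆ M.E) (hCsum : ∑ e ∈ C, φ e = 0) (hx : x ∈ C) {g : α} (hg : g ∈ M.E)
    (hgC : g ∉ C) (hspan : φ g ∈ span (ZMod 2) (φ '' ↑(C.erase x))) :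
    ∃ S ⊆ insert g C, x ∈ S ∧ ∑ e ∈ S, φ e = 0 ∧ S.card < C.card := by
  obtain ⟨P, hP, hPsum⟩ := mem_span_image_iff_exists_sum.mp hspan
  have hPC : P ⊆ C := hP.trans (erase_subset x C)
  have hPcard : 2 ≤ P.card := by
    by_contra! hlt
    obtain h0 | h1 : P.card = 0 ∨ P.card = 1 := by omega
    · rw [card_eq_zero.mp h0, sum_empty] at hPsum
      exact hφ.ne_zero hs hg hPsum.symm
    · obtain ⟨e, rfl⟩ := card_eq_one.mp h1
      rw [sum_singleton] at hPsum
      have heC : e ∈ C := hPC (mem_singleton_self e)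
      exact hgC (hφ.injOn hs (hC heC) hg hPsum ▸ heC)
  have hgCP : g ∉ C \ P := fun h => hgC (mem_sdiff.mp h).1
  refine ⟨insert g (C \ P), insert_subset_insert g sdiff_subset,
    mem_insert_of_mem (mem_sdiff.mpr ⟨hx, fun h => notMem_erase x C (hP h)⟩), ?_, ?_⟩
  · rw [sum_insert_eq_zero_iff hgCP, ← hPsum, sum_sdiff_eq_sub hPC, hCsum, zero_sub,
      ZModModule.neg_eq_self]
  · rw [card_insert_of_notMem hgCP, card_sdiff_of_subset hPC]
    have := card_le_card hPC
    omega

lemma exists_isCyclicFlat_mem_ssubset (hφ : M.IsRepresentation (ZMod 2) φ) (hs : M.Simple)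
    (hF : M.IsCyclicFlat F) (hx : x ∈ F) {G : Finset α} (hG : M.IsCyclicFlat G)
    (hGne : G.Nonempty) (hGF : G ⊂ F) : ∃ H, M.IsCyclicFlat H ∧ x ∈ H ∧ H ⊂ F := by
  obtain ⟨D, hDF, hxD, hD⟩ :=
    hφ.exists_sum_eq_zero_mem_of_rk_erase_eq hF.1 hx (cyc_eq_self_iff.mp hF.2.2 x hx)
  obtain ⟨C, hCD, hxC, hmin⟩ := exists_minimal_isZeroSum_mem hxD hD
  have hCF := hCD.trans hDF
  have hCE := hCF.trans hF.1
  rcases (M.rk_mono C F hCF hF.1).lt_or_eq with hlt | heq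
  · exact hφ.exists_isCyclicFlat_mem_ssubset_of_sum_eq_zero hF hCF hmin.1.2 hxC hlt
  -- `F ⊄ C`: the nonempty cyclic set `G ⊂ F` contains a zero-sum set, which would contain `C`
  have hFC : ¬ F ⊆ C := by
    intro hFC
    obtain ⟨y, hy⟩ := hGne
    obtain ⟨D', hD'G, hyD', hD'⟩ :=
      hφ.exists_sum_eq_zero_mem_of_rk_erase_eq hG.1 hy (cyc_eq_self_iff.mp hG.2.2 y hy)
    have hCD' := hmin.2 ⟨⟨y, hyD'⟩, hD'⟩ ((hD'G.trans hGF.subset).trans hFC)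
    exact hGF.not_subset (hFC.trans (hCD'.trans hD'G))
  obtain ⟨g, hgF, hgC⟩ := not_subset.mp hFC
  have hspan : φ g ∈ span (ZMod 2) (φ '' ↑(C.erase x)) := by
    rw [hφ.span_image_eq_of_rk_eq (erase_subset x C) hCE
        (hφ.rk_erase_eq_of_sum_eq_zero hCE hmin.1.2 hxC), hφ.span_image_eq_of_rk_eq hCF hF.1 heq]
    exact subset_span (Set.mem_image_of_mem φ hgF)
  obtain ⟨S, hSgC, hxS, hS, hSC⟩ :=
    hφ.exists_sum_eq_zero_card_lt hs hCE hmin.1.2 hxC (hF.1 hgF) hgC hspan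
  have hSF : S ⊆ F := hSgC.trans (insert_subset hgF hCF)
  refine hφ.exists_isCyclicFlat_mem_ssubset_of_sum_eq_zero hF hSF hS hxS ?_
  have := hφ.rk_lt_card_of_isZeroSum (hSF.trans hF.1) ⟨⟨x, hxS⟩, hS⟩
  have := hφ.rk_add_one_eq_card_of_minimal_isZeroSum hCE hmin
  omega

end Binary

end IsRepresentation

lemma exists_isAtomCF_subset_mem (hs : M.Simple) (hb : M.IsBinary) {F : Finset α}
    (hF : M.IsCyclicFlat F) {x : α} (hx : x ∈ F) : ∃ Z, M.IsAtomCF Z ∧ Z ⊆ F ∧ x ∈ Z := by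
  obtain ⟨m, φ, hφ⟩ := hb
  obtain ⟨Z, hZF, ⟨hZ, hxZ⟩, hZmin⟩ :=
    exists_minimal_le_of_wellFoundedLT (fun Z => M.IsCyclicFlat Z ∧ x ∈ Z) F ⟨hF, hx⟩
  refine ⟨Z, ⟨hZ, ne_empty_of_mem hxZ, ?_⟩, hZF, hxZ⟩
  rintro ⟨G, hG, hGne, hGZ⟩
  obtain ⟨H, hH, hxH, hHZ⟩ := IsRepresentation.exists_isCyclicFlat_mem_ssubset (φ := φ) hφ hs
    hZ hxZ hG (empty_ssubset.mp hGne) hGZ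
  exact hHZ.not_subset (hZmin ⟨hH, hxH⟩ hHZ.subset)

end FinMatroid

open Classical in
theorem cyclicFlat_eq_union_atoms_general {α : Type*} [DecidableEq α] (M : FinMatroid α)
    (hs : M.Simple) (hb : M.IsBinary)
    (Y : Finset α) (hY : M.IsCyclicFlat Y) :
    Y = (M.E.powerset.filter fun Z => M.IsAtomCF Z ∧ Z ⊆ Y).biUnion id := by
  ext a
  simp only [mem_biUnion, mem_filter, mem_powerset, id]
  refine ⟨fun ha => ?_, fun ⟨Z, ⟨_, _, hZY⟩, haZ⟩ => hZY haZ⟩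
  obtain ⟨Z, hZ, hZY, haZ⟩ := M.exists_isAtomCF_subset_mem hs hb hY ha
  exact ⟨Z, ⟨hZ.1.1, hZ, hZY⟩, haZ⟩

open Classical in
/-- In a simple binary matroid with no isthmuses, every cyclic flat `Y`
is the union of the atoms of the lattice of cyclic flats contained in it; in
particular `Z(M)` is atomic. -/
theorem cyclicFlat_eq_union_atoms {α : Type*} [DecidableEq α] (M : FinMatroid α)
    (hs : M.Simple) (hni : M.NoIsthmus) (hb : M.IsBinary)
    (Y : Finset α) (hY : M.IsCyclicFlat Y) :
    Y = (M.E.powerset.filter fun Z => M.IsAtomCF Z ∧ Z ⊆ Y).biUnion id :=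
  cyclicFlat_eq_union_atoms_general M hs hb Y hY
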